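/- Let ε ∈ {+1, −1} and let a_M be the Martinet 1-form on ℝ², a_M(x,y)(v) = (1+εx²)·v₂, with vector field X_M(x,y) = (−(1+εx²), 0) spanning its kernel near the origin. Let k ≥ 0 be an integer and f a smooth function near 0 ∈ ℝ² with f(0,0) = 0, ∂f/∂y(0,0) ≠ 0, and such that x ↦ f(x,0) has all derivatives of order ≤ k equal to 0 at x = 0 and nonzero derivative of order k+1 at x = 0. Then there exist a local diffeomorphism φ at 0 with φ(0) = 0 and smooth nonvanishing functions κ, λ near 0 such that a_M = κ·φ*(a_M) and f·X_M = λ·φ*((y − x^{k+1})·X_M) near 0; that is, f·X_M is orbitally a_M-conjugate to (y − x^{k+1})·X_M. -/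

import Mathlib

/-!
Extend `f` to a smooth function `F` on `ℝ²`. Hadamard's lemma, in the form
`G(x, z) = z · ∫₀¹ ∂_z G(x, t z) dt` for `G(x, 0) = 0`, gives
`F(x, y) = x^{k+1} q(x) + y B(x, y)` with `q(0) ≠ 0` and `B(0) = ∂_y f(0) ≠ 0`.
Choosing a sign `s` with `w := -q(x) / (s B)` positive near `0`, this reads
`F = s B · (s y - α^{k+1})` for `α := x w^{1/(k+1)}`, and `∂_x α(0) = w(0)^{1/(k+1)} ≠ 0`.
The local diffeomorphism `φ = (α, s y)` keeps `dy` and `∂_x` up to factors: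
`φ*a_M = s (1 + ε α²) dy` and `φ*X_M` is a multiple of `X_M`, so `φ` is a conformal symmetry
of `a_M` and the factor `λ` absorbs `s B`, the two conformal factors and `∂_x α`.
-/

noncomputable section

/-- The Martinet 1-form `a_M(x,y)(v) = (1+εx²)·v₂`. -/
def aM (ε : ℝ) : ℝ × ℝ → ((ℝ × ℝ) →L[ℝ] ℝ) :=
  fun p => (1 + ε * p.1 ^ 2) • ContinuousLinearMap.snd ℝ ℝ ℝ

/-- The vector field `X_M(x,y) = (−(1+εx²), 0)` spanning the kernel of the
Martinet 1-form near the origin. -/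
def XM (ε : ℝ) : ℝ × ℝ → ℝ × ℝ := fun p => (-(1 + ε * p.1 ^ 2), 0)

open Filter Topology ContinuousLinearMap
open scoped ContDiff

universe u

section ParametricIntegral

variable {P : Type u} [NormedAddCommGroup P] [NormedSpace ℝ P] [FiniteDimensional ℝ P] {a b : ℝ}

theorem hasFDerivAt_intervalIntegral_of_contDiff {E : Type u} [NormedAddCommGroup E]
    [NormedSpace ℝ E] {F : P × ℝ → E} (hF : ContDiff ℝ 1 F) (p₀ : P) :
    HasFDerivAt (fun p => ∫ t in a..b, F (p, t))
      (∫ t in a..b, fderiv ℝ F (p₀, t) ∘L inl ℝ P ℝ) p₀ := by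
  have hF' : Continuous fun z : P × ℝ => fderiv ℝ F z ∘L inl ℝ P ℝ :=
    (hF.continuous_fderiv one_ne_zero).clm_comp continuous_const
  obtain ⟨C, hC⟩ := ((isCompact_closedBall p₀ 1).prod isCompact_uIcc).exists_bound_of_continuousOn
    hF'.continuousOn
  have hline : ∀ p : P, Continuous fun t : ℝ => (p, t) := fun _ => by fun_prop
  refine intervalIntegral.hasFDerivAt_integral_of_dominated_of_fderiv_le (bound := fun _ => C)
    (F' := fun p t => fderiv ℝ F (p, t) ∘L inl ℝ P ℝ)
    (Metric.ball_mem_nhds p₀ one_pos)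
    (.of_forall fun p => (hF.continuous.comp (hline p)).aestronglyMeasurable)
    ((hF.continuous.comp (hline p₀)).intervalIntegrable _ _)
    (hF'.comp (hline p₀)).aestronglyMeasurable ?_ intervalIntegrable_const ?_
  · exact .of_forall fun t ht p hp =>
      hC (p, t) ⟨Metric.ball_subset_closedBall hp, Set.uIoc_subset_uIcc ht⟩
  · exact .of_forall fun t _ p _ =>
      (hF.differentiable one_ne_zero (p, t)).hasFDerivAt.comp p (hasFDerivAt_prodMk_left p t)

-- The induction passes from `E` to `P →L[ℝ] E`, hence the common universe of `P` and `E`.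
theorem contDiff_intervalIntegral_of_contDiff_nat (n : ℕ) :
    ∀ {E : Type u} [NormedAddCommGroup E] [NormedSpace ℝ E] {F : P × ℝ → E},
      ContDiff ℝ n F → ContDiff ℝ n fun p => ∫ t in a..b, F (p, t) := by
  induction n with
  | zero =>
    intro E _ _ F hF
    exact contDiff_zero.2 (intervalIntegral.continuous_parametric_intervalIntegral_of_continuous'
      (contDiff_zero.1 hF : Continuous fun q : P × ℝ => F (q.1, q.2)) a b)
  | succ n ih =>
    intro E _ _ F hF
    have hF1 : ContDiff ℝ 1 F := hF.of_le (by exact_mod_cast Nat.le_add_left 1 n)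
    have hfderiv : (fderiv ℝ fun p => ∫ t in a..b, F (p, t)) =
        fun p => ∫ t in a..b, fderiv ℝ F (p, t) ∘L inl ℝ P ℝ :=
      funext fun p => (hasFDerivAt_intervalIntegral_of_contDiff hF1 p).fderiv
    rw [Nat.cast_succ]
    refine contDiff_succ_iff_fderiv.2
      ⟨fun p => (hasFDerivAt_intervalIntegral_of_contDiff hF1 p).differentiableAt, by simp, ?_⟩
    rw [hfderiv]
    exact ih ((hF.fderiv_right le_rfl).clm_comp contDiff_const)

theorem contDiff_intervalIntegral_of_contDiff {E : Type u} [NormedAddCommGroup E]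
    [NormedSpace ℝ E] {n : ℕ∞} {F : P × ℝ → E} (hF : ContDiff ℝ n F) :
    ContDiff ℝ n fun p => ∫ t in a..b, F (p, t) :=
  contDiff_iff_forall_nat_le.2 fun m hm =>
    contDiff_intervalIntegral_of_contDiff_nat m (hF.of_le (mod_cast hm))

end ParametricIntegral

section Hadamard

variable {P E : Type u} [NormedAddCommGroup P] [NormedSpace ℝ P] [FiniteDimensional ℝ P]
  [NormedAddCommGroup E] [NormedSpace ℝ E] [CompleteSpace E]

theorem exists_contDiff_eq_snd_smul {G : P × ℝ → E} (hG : ContDiff ℝ ∞ G)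
    (h0 : ∀ x, G (x, 0) = 0) : ∃ u : P × ℝ → E, ContDiff ℝ ∞ u ∧ ∀ p, G p = p.2 • u p := by
  set D : (P × ℝ) × ℝ → E := fun z => fderiv ℝ G (z.1.1, z.2 * z.1.2) (0, 1)
  have hD : ContDiff ℝ ∞ D :=
    ((hG.fderiv_right (by simp)).comp ((contDiff_fst.comp contDiff_fst).prodMk
      (contDiff_snd.mul (contDiff_snd.comp contDiff_fst)))).clm_apply contDiff_const
  refine ⟨fun p => ∫ t in (0 : ℝ)..1, D (p, t), contDiff_intervalIntegral_of_contDiff hD,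
    fun p => ?_⟩
  have hline : ∀ t : ℝ, HasDerivAt (fun t : ℝ => G (p.1, t * p.2)) (p.2 • D (p, t)) t := by
    intro t
    have h := ((hG.differentiable (by simp)) (p.1, t * p.2)).hasFDerivAt.comp_hasDerivAt t
      ((hasDerivAt_const t p.1).prodMk ((hasDerivAt_id t).mul_const p.2))
    simpa [D, Function.comp_def, ← map_smul] using h
  have hcont : Continuous fun t => p.2 • D (p, t) :=
    continuous_const.smul (hD.continuous.comp (continuous_const.prodMk continuous_id))
  have := intervalIntegral.integral_eq_sub_of_hasDerivAt (fun t _ => hline t)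
    (hcont.intervalIntegrable 0 1)
  simpa [h0, intervalIntegral.integral_smul] using this.symm

end Hadamard

theorem exists_contDiff_eq_mul {ψ : ℝ → ℝ} (hψ : ContDiff ℝ ∞ ψ) (h0 : ψ 0 = 0) :
    ∃ q : ℝ → ℝ, ContDiff ℝ ∞ q ∧ ∀ z, ψ z = z * q z := by
  obtain ⟨u, hu, hψu⟩ := exists_contDiff_eq_snd_smul (P := ℝ) (hψ.comp contDiff_snd)
    fun _ => h0
  exact ⟨fun z => u (0, z), hu.comp (contDiff_const.prodMk contDiff_id), fun z => hψu (0, z)⟩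

section IteratedDeriv

variable {𝕜 : Type*} [NontriviallyNormedField 𝕜]

theorem iteratedDeriv_succ_id_mul_zero {g : 𝕜 → 𝕜} {n : ℕ} (hg : ContDiffAt 𝕜 (n + 1) g 0) :
    iteratedDeriv (n + 1) (fun z => z * g z) 0 = (n + 1) * iteratedDeriv n g 0 := by
  rw [iteratedDeriv_fun_mul contDiffAt_id (mod_cast hg)]
  simp [iteratedDeriv_fun_id_zero]

theorem iteratedDeriv_pow_mul_zero {q : 𝕜 → 𝕜} {m : ℕ} (hq : ContDiffAt 𝕜 m q 0) :
    iteratedDeriv m (fun z => z ^ m * q z) 0 = m.factorial * q 0 := by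
  rw [iteratedDeriv_fun_mul (f := fun z => z ^ m) (by fun_prop) hq, Finset.sum_range_succ,
    Finset.sum_eq_zero fun i hi => ?_]
  · simp [Nat.descFactorial_self]
  · simp [(Nat.sub_pos_of_lt (Finset.mem_range.1 hi)).ne']

end IteratedDeriv

theorem exists_contDiff_eq_pow_mul {ψ : ℝ → ℝ} (hψ : ContDiff ℝ ∞ ψ) {k : ℕ}
    (hflat : ∀ n < k, iteratedDeriv n ψ 0 = 0) :
    ∃ q : ℝ → ℝ, ContDiff ℝ ∞ q ∧ ∀ z, ψ z = z ^ k * q z := by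
  induction k generalizing ψ with
  | zero => exact ⟨ψ, hψ, by simp⟩
  | succ k ih =>
    obtain ⟨g, hg, hψg⟩ := exists_contDiff_eq_mul hψ (by simpa using hflat 0 k.succ_pos)
    have hgflat : ∀ n < k, iteratedDeriv n g 0 = 0 := fun n hn => by
      have h := hflat (n + 1) (by omega)
      rw [funext hψg,
        iteratedDeriv_succ_id_mul_zero (n := n) (hg.contDiffAt.of_le (mod_cast le_top))] at h
      exact (mul_eq_zero.1 h).resolve_left n.cast_add_one_ne_zero
    obtain ⟨q, hq, hgq⟩ := ih hg hgflat
    exact ⟨q, hq, fun z => by rw [hψg, hgq, pow_succ']; ring⟩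

theorem ContDiffOn.exists_contDiff_eventuallyEq {E F : Type*} [NormedAddCommGroup E]
    [NormedSpace ℝ E] [HasContDiffBump E] [NormedAddCommGroup F] [NormedSpace ℝ F] {n : ℕ∞}
    {f : E → F} {U : Set E} {x : E} (hf : ContDiffOn ℝ n f U) (hU : IsOpen U) (hx : x ∈ U) :
    ∃ g : E → F, ContDiff ℝ n g ∧ g =ᶠ[𝓝 x] f := by
  obtain ⟨R, hR, hRU⟩ := Metric.isOpen_iff.1 hU x hx
  let χ : ContDiffBump x := ⟨R / 4, R / 2, by positivity, by linarith⟩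
  refine ⟨fun y => χ y • f y, contDiff_iff_contDiffAt.2 fun y => ?_, ?_⟩
  · by_cases hy : y ∈ tsupport χ
    · rw [χ.tsupport_eq] at hy
      exact χ.contDiffAt.smul (hf.contDiffAt (hU.mem_nhds
        (hRU (Metric.closedBall_subset_ball (half_lt_self hR) hy))))
    · refine (contDiffAt_const (c := (0 : F))).congr_of_eventuallyEq ?_
      filter_upwards [notMem_tsupport_iff_eventuallyEq.1 hy] with z hz
      simp [show χ z = 0 from hz]
  · filter_upwards [χ.eventuallyEq_one] with z hz
    simp [show χ z = 1 from hz]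

theorem fderiv_apply_zero_one_of_eq_mul {F B : ℝ × ℝ → ℝ} (hF : DifferentiableAt ℝ F 0)
    (hB : DifferentiableAt ℝ B 0) (hFB : ∀ y, F (0, y) = y * B (0, y)) :
    fderiv ℝ F 0 (0, 1) = B 0 := by
  have hline : HasDerivAt (fun y : ℝ => ((0 : ℝ), y)) (0, 1) 0 :=
    (hasDerivAt_const 0 0).prodMk (hasDerivAt_id 0)
  have hF' := hF.hasFDerivAt.comp_hasDerivAt (0 : ℝ) hline
  have hB' := (hasDerivAt_id (0 : ℝ)).mul ((hB.hasFDerivAt).comp_hasDerivAt (0 : ℝ) hline)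
  simp only [Function.comp_def, hFB, id, zero_mul, one_mul, add_zero] at hF' hB'
  exact hF'.unique hB'

theorem exists_eq_pow_mul_add_snd_mul {F : ℝ × ℝ → ℝ} (hF : ContDiff ℝ ∞ F) {k : ℕ}
    (hflat : ∀ n ≤ k, iteratedDeriv n (fun x => F (x, 0)) 0 = 0)
    (hnonflat : iteratedDeriv (k + 1) (fun x => F (x, 0)) 0 ≠ 0) :
    ∃ (q : ℝ → ℝ) (B : ℝ × ℝ → ℝ), ContDiff ℝ ∞ q ∧ ContDiff ℝ ∞ B ∧ q 0 ≠ 0 ∧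
      B 0 = fderiv ℝ F 0 (0, 1) ∧ ∀ p : ℝ × ℝ, F p = p.1 ^ (k + 1) * q p.1 + p.2 * B p := by
  have hψ : ContDiff ℝ ∞ fun x => F (x, 0) := hF.comp (contDiff_id.prodMk contDiff_const)
  obtain ⟨q, hq, hψq⟩ := exists_contDiff_eq_pow_mul hψ fun n hn => hflat n (Nat.lt_succ_iff.1 hn)
  obtain ⟨B, hB, hFB⟩ := exists_contDiff_eq_snd_smul (P := ℝ)
    (G := fun p => F p - F (p.1, 0)) (hF.sub (hψ.comp contDiff_fst)) fun x => sub_self _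
  have hF_eq : ∀ p : ℝ × ℝ, F p = p.1 ^ (k + 1) * q p.1 + p.2 * B p := fun p => by
    rw [← hψq, ← smul_eq_mul, ← hFB, add_sub_cancel]
  refine ⟨q, B, hq, hB, fun hq0 => hnonflat ?_, ?_, hF_eq⟩
  · rw [funext hψq, iteratedDeriv_pow_mul_zero (hq.contDiffAt.of_le (mod_cast le_top)), hq0,
      mul_zero]
  · refine (fderiv_apply_zero_one_of_eq_mul (hF.differentiable (by simp) 0)
      (hB.differentiable (by simp) 0) fun y => ?_).symm
    simp [hF_eq]

theorem exists_pow_eq_fst_pow_mul {w : ℝ × ℝ → ℝ} (hw : ∀ᶠ p in 𝓝 0, ContDiffAt ℝ ∞ w p)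
    (hw0 : 0 < w 0) {n : ℕ} (hn : n ≠ 0) :
    ∃ α : ℝ × ℝ → ℝ, (∀ᶠ p in 𝓝 0, ContDiffAt ℝ ∞ α p) ∧ α 0 = 0 ∧
      fderiv ℝ α 0 (1, 0) ≠ 0 ∧ ∀ᶠ p in 𝓝 0, α p ^ n = p.1 ^ n * w p := by
  have hpos : ∀ᶠ p in 𝓝 0, 0 < w p :=
    hw.self_of_nhds.continuousAt.eventually (eventually_gt_nhds hw0)
  have hroot : ∀ᶠ p in 𝓝 (0 : ℝ × ℝ), ContDiffAt ℝ ∞ (fun p => w p ^ (n⁻¹ : ℝ)) p := by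
    filter_upwards [hw, hpos] with p hwp hp
    exact hwp.rpow_const_of_ne hp.ne'
  refine ⟨fun p => p.1 * w p ^ (n⁻¹ : ℝ), ?_, by simp, ?_, ?_⟩
  · filter_upwards [hroot] with p hp
    exact contDiffAt_fst.mul hp
  · rw [fderiv_fun_mul differentiableAt_fst (hroot.self_of_nhds.differentiableAt (by simp))]
    simpa [fderiv_fst] using (Real.rpow_pos_of_pos hw0 _).ne'
  · filter_upwards [hpos] with p hp
    rw [mul_pow, Real.rpow_inv_natCast_pow hp.le hn]

theorem ContinuousLinearMap.IsInvertible.det_ne_zero {E : Type*} [NormedAddCommGroup E]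
    [NormedSpace ℝ E] {f : E →L[ℝ] E} (hf : f.IsInvertible) : f.det ≠ 0 := by
  obtain ⟨e, rfl⟩ := hf
  exact (LinearEquiv.isUnit_det' e.toLinearEquiv).ne_zero

theorem ContinuousLinearMap.apply_mk_zero (L : ℝ × ℝ →L[ℝ] ℝ) (x : ℝ) :
    L (x, 0) = x * L (1, 0) := by
  rw [← smul_eq_mul, ← map_smul, Prod.smul_mk, smul_eq_mul, mul_one, smul_zero]

section ProdSmulSnd

variable {L : ℝ × ℝ →L[ℝ] ℝ} {s : ℝ}

theorem isInvertible_prod_smul_snd (hL : L (1, 0) ≠ 0) (hs : s ≠ 0) :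
    (L.prod (s • snd ℝ ℝ ℝ)).IsInvertible := by
  have hinj : Function.Injective (L.prod (s • snd ℝ ℝ ℝ)) := by
    refine (injective_iff_map_eq_zero _).2 fun ⟨x, y⟩ hv => ?_
    simp only [prod_apply, smul_apply, coe_snd', smul_eq_mul, Prod.mk_eq_zero, mul_eq_zero, hs,
      false_or] at hv
    obtain ⟨hx, rfl⟩ := hv
    rw [L.apply_mk_zero] at hx
    simpa [hL] using hx
  exact ⟨(LinearEquiv.ofInjectiveEndo _ hinj).toContinuousLinearEquiv, rfl⟩

theorem inverse_prod_smul_snd_apply (hL : L (1, 0) ≠ 0) (hs : s ≠ 0) (x : ℝ) :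
    (L.prod (s • snd ℝ ℝ ℝ)).inverse (x, 0) = (x / L (1, 0), 0) := by
  rw [(isInvertible_prod_smul_snd hL hs).inverse_apply_eq, prod_apply,
    L.apply_mk_zero (x / L (1, 0)), div_mul_cancel₀ _ hL]
  simp

theorem aM_comp_prod_smul_snd (ε : ℝ) (q : ℝ × ℝ) :
    (aM ε q).comp (L.prod (s • snd ℝ ℝ ℝ)) = s • aM ε q := by
  ext <;> simp [aM]; ring

end ProdSmulSnd

theorem hasFDerivAt_prodMk_mul_snd {α : ℝ × ℝ → ℝ} {p : ℝ × ℝ} (hα : DifferentiableAt ℝ α p)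
    (s : ℝ) :
    HasFDerivAt (fun p : ℝ × ℝ => (α p, s * p.2)) ((fderiv ℝ α p).prod (s • snd ℝ ℝ ℝ)) p :=
  hα.hasFDerivAt.prodMk ((snd ℝ ℝ ℝ).hasFDerivAt.const_smul s)

/-- `f • X_M` is orbitally `a_M`-conjugate to `g • X_M` on a neighbourhood of `0`. -/
def MartinetOrbitallyConj (ε : ℝ) (f g : ℝ × ℝ → ℝ) : Prop :=
  ∃ (φ : ℝ × ℝ → ℝ × ℝ) (W : Set (ℝ × ℝ)) (κ lam : ℝ × ℝ → ℝ),
    IsOpen W ∧ (0 : ℝ × ℝ) ∈ W ∧ φ 0 = 0 ∧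
    ContDiffOn ℝ ∞ φ W ∧ (∀ p ∈ W, (fderiv ℝ φ p).det ≠ 0) ∧
    ContDiffOn ℝ ∞ κ W ∧ (∀ p ∈ W, κ p ≠ 0) ∧
    ContDiffOn ℝ ∞ lam W ∧ (∀ p ∈ W, lam p ≠ 0) ∧
    (∀ p ∈ W, aM ε p = κ p • ((aM ε (φ p)).comp (fderiv ℝ φ p))) ∧
    (∀ p ∈ W, f p • XM ε p = lam p • (fderiv ℝ φ p).inverse (g (φ p) • XM ε (φ p)))

theorem martinetOrbitallyConj_of_eventuallyEq (ε : ℝ) (k : ℕ) {f c α : ℝ × ℝ → ℝ} {s : ℝ}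
    (hs : s ≠ 0) (hc : ∀ᶠ p in 𝓝 0, ContDiffAt ℝ ∞ c p) (hc0 : c 0 ≠ 0)
    (hα : ∀ᶠ p in 𝓝 0, ContDiffAt ℝ ∞ α p) (hα0 : α 0 = 0) (hαx : fderiv ℝ α 0 (1, 0) ≠ 0)
    (hf : ∀ᶠ p in 𝓝 0, f p = c p * (s * p.2 - α p ^ (k + 1))) :
    MartinetOrbitallyConj ε f fun p => p.2 - p.1 ^ (k + 1) := by
  have hαx_cont : ContinuousAt (fun p => fderiv ℝ α p (1, 0)) 0 :=
    ((hα.self_of_nhds.fderiv_right (m := ∞) (by simp)).clm_apply contDiffAt_const).continuousAt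
  have hα_cont : ContinuousAt α 0 := hα.self_of_nhds.continuousAt
  have hq : ∀ᶠ p : ℝ × ℝ in 𝓝 0, 1 + ε * p.1 ^ 2 ≠ 0 :=
    (by fun_prop : ContinuousAt (fun p : ℝ × ℝ => 1 + ε * p.1 ^ 2) 0).eventually_ne (by simp)
  have hqα : ∀ᶠ p in 𝓝 0, 1 + ε * α p ^ 2 ≠ 0 :=
    (by fun_prop : ContinuousAt (fun p => 1 + ε * α p ^ 2) 0).eventually_ne (by simp [hα0])
  obtain ⟨W, hWP, hWo, hW0⟩ := eventually_nhds_iff.1 <| hc.and <| hα.and <| hf.and <|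
    (hc.self_of_nhds.continuousAt.eventually_ne hc0).and <| (hαx_cont.eventually_ne hαx).and <|
    hq.and hqα
  have hφ : ∀ p ∈ W, HasFDerivAt (fun p : ℝ × ℝ => (α p, s * p.2))
      ((fderiv ℝ α p).prod (s • snd ℝ ℝ ℝ)) p := fun p hp =>
    hasFDerivAt_prodMk_mul_snd ((hWP p hp).2.1.differentiableAt (by simp)) s
  refine ⟨fun p => (α p, s * p.2), W, fun p => (1 + ε * p.1 ^ 2) / (s * (1 + ε * α p ^ 2)),
    fun p => c p * (1 + ε * p.1 ^ 2) * fderiv ℝ α p (1, 0) / (1 + ε * α p ^ 2), hWo, hW0,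
    by simp [hα0], fun p hp => ?_, fun p hp => ?_, fun p hp => ?_, fun p hp => ?_,
    fun p hp => ?_, fun p hp => ?_, fun p hp => ?_, fun p hp => ?_⟩ <;>
  obtain ⟨hcp, hαp, hfp, hc0p, hαxp, hqp, hqαp⟩ := hWP p hp
  · exact (hαp.prodMk (contDiffAt_const.mul contDiffAt_snd)).contDiffWithinAt
  · rw [(hφ p hp).fderiv]
    exact (isInvertible_prod_smul_snd hαxp hs).det_ne_zero
  · exact ContDiffAt.contDiffWithinAt (by fun_prop (disch := exact mul_ne_zero hs hqαp))
  · exact div_ne_zero hqp (mul_ne_zero hs hqαp)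
  · have hαxp' := (hαp.fderiv_right (m := ∞) (by simp)).clm_apply (contDiffAt_const (c := (1, 0)))
    exact ContDiffAt.contDiffWithinAt (by fun_prop (disch := exact hqαp))
  · exact div_ne_zero (mul_ne_zero (mul_ne_zero hc0p hqp) hαxp) hqαp
  · rw [(hφ p hp).fderiv, aM_comp_prod_smul_snd, smul_smul]
    ext <;> simp [aM]
    field_simp
  · rw [(hφ p hp).fderiv]
    simp only [XM, Prod.smul_mk, smul_eq_mul, mul_zero, inverse_prod_smul_snd_apply hαxp hs]
    rw [hfp]
    ext <;> field_simp

theorem exists_mul_self_eq_one_and_pos_div {a b : ℝ} (ha : a ≠ 0) (hb : b ≠ 0) :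
    ∃ s : ℝ, s * s = 1 ∧ 0 < a / (s * b) := by
  rcases (div_ne_zero ha hb).lt_or_gt with h | h
  · exact ⟨-1, by norm_num, by rwa [neg_one_mul, div_neg, neg_pos]⟩
  · exact ⟨1, by norm_num, by rwa [one_mul]⟩

theorem stmt_9_general (ε : ℝ)
    (k : ℕ) (U : Set (ℝ × ℝ)) (hUo : IsOpen U) (hU0 : (0 : ℝ × ℝ) ∈ U)
    (f : ℝ × ℝ → ℝ) (hf : ContDiffOn ℝ (⊤ : ℕ∞) f U)
    (hfy : fderiv ℝ f 0 (0, 1) ≠ 0)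
    (hflat : ∀ n ≤ k, iteratedDeriv n (fun x : ℝ => f (x, 0)) 0 = 0)
    (hnonflat : iteratedDeriv (k + 1) (fun x : ℝ => f (x, 0)) 0 ≠ 0) :
    ∃ (φ : ℝ × ℝ → ℝ × ℝ) (W : Set (ℝ × ℝ)) (κ lam : ℝ × ℝ → ℝ),
      IsOpen W ∧ (0 : ℝ × ℝ) ∈ W ∧ φ 0 = 0 ∧
      ContDiffOn ℝ (⊤ : ℕ∞) φ W ∧ (∀ p ∈ W, (fderiv ℝ φ p).det ≠ 0) ∧
      ContDiffOn ℝ (⊤ : ℕ∞) κ W ∧ (∀ p ∈ W, κ p ≠ 0) ∧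
      ContDiffOn ℝ (⊤ : ℕ∞) lam W ∧ (∀ p ∈ W, lam p ≠ 0) ∧
      -- a_M = κ·φ*(a_M)
      (∀ p ∈ W, aM ε p = κ p • ((aM ε (φ p)).comp (fderiv ℝ φ p))) ∧
      -- f·X_M = λ·φ*((y − x^{k+1})·X_M)
      (∀ p ∈ W, f p • XM ε p =
        lam p • (fderiv ℝ φ p).inverse
          (((φ p).2 - (φ p).1 ^ (k + 1)) • XM ε (φ p))) := by
  obtain ⟨F, hF, hFf⟩ := hf.exists_contDiff_eventuallyEq hUo hU0
  have hFf_axis : (fun x : ℝ => F (x, 0)) =ᶠ[𝓝 0] fun x => f (x, 0) :=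
    hFf.comp_tendsto (Continuous.tendsto (by fun_prop) 0)
  obtain ⟨q, B, hq, hB, hq0, hB0, hFqB⟩ := exists_eq_pow_mul_add_snd_mul hF
    (fun n hn => (hFf_axis.iteratedDeriv_eq n).trans (hflat n hn))
    (by rwa [hFf_axis.iteratedDeriv_eq])
  have hB0' : B 0 ≠ 0 := by rwa [hB0, hFf.fderiv_eq]
  obtain ⟨s, hs, hw0⟩ := exists_mul_self_eq_one_and_pos_div (neg_ne_zero.2 hq0) hB0'
  have hs0 : s ≠ 0 := left_ne_zero_of_mul_eq_one hs
  have hc : ∀ᶠ p in 𝓝 (0 : ℝ × ℝ), s * B p ≠ 0 :=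
    (hB.continuous.const_mul s).continuousAt.eventually_ne (mul_ne_zero hs0 hB0')
  obtain ⟨α, hα, hα0, hαx, hαw⟩ := exists_pow_eq_fst_pow_mul (n := k + 1)
    (w := fun p => -q p.1 / (s * B p)) (hc.mono fun p hp =>
      (hq.comp contDiff_fst).neg.contDiffAt.div (contDiff_const.mul hB).contDiffAt hp)
    hw0 k.succ_ne_zero
  have hconj : MartinetOrbitallyConj ε f fun p => p.2 - p.1 ^ (k + 1) := by
    refine martinetOrbitallyConj_of_eventuallyEq ε k hs0
      (.of_forall fun p => (contDiff_const.mul hB).contDiffAt) (mul_ne_zero hs0 hB0') hα hα0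
      hαx ?_
    filter_upwards [hFf, hc, hαw] with p hFp hcp hαp
    rw [← hFp, hFqB, hαp]
    field_simp [right_ne_zero_of_mul hcp]
    linear_combination -(p.2 * B p) * hs
  exact hconj

/-- For `ε = ±1`: if `f` is smooth near `0 ∈ ℝ²` with `f(0,0) = 0`,
`∂f/∂y(0,0) ≠ 0`, and `x ↦ f(x,0)` vanishes to order exactly `k+1` at `0`, then
`f·X_M` is orbitally `a_M`-conjugate to `(y − x^{k+1})·X_M`: there are a local
diffeomorphism `φ` fixing `0` which is a conformal symmetry of `a_M`
(`a_M = κ·φ*(a_M)`) and a smooth nonvanishing `λ` with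
`f·X_M = λ·φ*((y − x^{k+1})·X_M)` near `0`. -/
theorem stmt_9 (ε : ℝ) (hε : ε = 1 ∨ ε = -1)
    (k : ℕ) (U : Set (ℝ × ℝ)) (hUo : IsOpen U) (hU0 : (0 : ℝ × ℝ) ∈ U)
    (f : ℝ × ℝ → ℝ) (hf : ContDiffOn ℝ (⊤ : ℕ∞) f U)
    (hf0 : f 0 = 0) (hfy : fderiv ℝ f 0 (0, 1) ≠ 0)
    (hflat : ∀ n ≤ k, iteratedDeriv n (fun x : ℝ => f (x, 0)) 0 = 0)
    (hnonflat : iteratedDeriv (k + 1) (fun x : ℝ => f (x, 0)) 0 ≠ 0) :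
    ∃ (φ : ℝ × ℝ → ℝ × ℝ) (W : Set (ℝ × ℝ)) (κ lam : ℝ × ℝ → ℝ),
      IsOpen W ∧ (0 : ℝ × ℝ) ∈ W ∧ φ 0 = 0 ∧
      ContDiffOn ℝ (⊤ : ℕ∞) φ W ∧ (∀ p ∈ W, (fderiv ℝ φ p).det ≠ 0) ∧
      ContDiffOn ℝ (⊤ : ℕ∞) κ W ∧ (∀ p ∈ W, κ p ≠ 0) ∧
      ContDiffOn ℝ (⊤ : ℕ∞) lam W ∧ (∀ p ∈ W, lam p ≠ 0) ∧
      -- a_M = κ·φ*(a_M)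
      (∀ p ∈ W, aM ε p = κ p • ((aM ε (φ p)).comp (fderiv ℝ φ p))) ∧
      -- f·X_M = λ·φ*((y − x^{k+1})·X_M)
      (∀ p ∈ W, f p • XM ε p =
        lam p • (fderiv ℝ φ p).inverse
          (((φ p).2 - (φ p).1 ^ (k + 1)) • XM ε (φ p))) :=
  stmt_9_general ε k U hUo hU0 f hf hfy hflat hnonflat
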